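/- arXiv:2605.22466 — 2 statements merged into one kernel-verified Lean document; each statement's English description precedes it below -/
import Mathlib

section
/- For n ≥ 3 and 2 ≤ k ≤ n, the resultant Res(g_k, h_n) is (up to sign) a power of 2, where g_n, h_n are the numerator and denominator of the n-th iterate of f(x) = 2/(x−1)². -/
open Polynomial

/-- `(g_n, h_n)` with `f^n = g_n / h_n` for `f(x) = 2/(x-1)²`, indexed so that
`ghPair k n = (g_{n+1}, h_{n+1})`. -/
noncomputable def ghPair (k : Type*) [Field k] : ℕ → k[X] × k[X]
  | 0 => (C 2, (X - C 1) ^ 2)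
  | n + 1 => (2 * (ghPair k n).2 ^ 2, ((ghPair k n).1 - (ghPair k n).2) ^ 2)

/-- The numerator `g_n` of `f^n` (for `n ≥ 1`). -/
noncomputable def gPol (k : Type*) [Field k] (n : ℕ) : k[X] := (ghPair k (n - 1)).1

/-- The denominator `h_n` of `f^n` (for `n ≥ 1`). -/
noncomputable def hPol (k : Type*) [Field k] (n : ℕ) : k[X] := (ghPair k (n - 1)).2

/-- The resultant of two rational polynomials, computed over `ℂ` by the formula
`Res(p, q) = lc(p)^(deg q) · ∏_{p(α)=0} q(α)` (roots counted with multiplicity). -/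
noncomputable def resQ (p q : ℚ[X]) : ℂ :=
  (p.map (algebraMap ℚ ℂ)).leadingCoeff ^ q.natDegree *
    (((p.map (algebraMap ℚ ℂ)).roots.map fun α => (q.map (algebraMap ℚ ℂ)).eval α).prod)

/-!
Write `g[j], h[j]` for the components of `ghPair K j` (the paper's `g_{j+1}, h_{j+1}`) and
`d[j] = g[j] - h[j]`, so that `g[j+1] = 2 h[j]²` and `h[j+1] = d[j]²`. Over an algebraically
closed field the resultant is `lc(p)^(deg q) · ∏_{p(α)=0} q(α)`, and each such root product only
sees `q` modulo `p`. At a root of `h[j]` the pair `(g, h)` runs through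
`(x, 0), (0, x²), (2x⁴, x⁴), …` with `x = g[j](α)`, so `h[j+m+1] ≡ g[j]^(2^(m+1))`; at a root of
`d[j]` we have `h[j] = g[j]` and `d[j+1] = 2 g[j]²`; at a root of `d[j+1]`, `g[j+1] = d[j]²`.
By induction on `j`, the root products of `g[j]` over `d[j]`, of `g[j]` over `h[j]`, and of
`h[j+m+1]` over `h[j]` are therefore `±2^e`. The single step that is not a congruence swaps
`d[j]` and `d[j+1]`, which costs only a sign because `lc(d[j]) = ±1`.
-/

section RootProd

variable {K : Type*} [Field K]

noncomputable def rootProd (p q : K[X]) : K := (p.roots.map q.eval).prod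

lemma rootProd_mul (p q r : K[X]) : rootProd p (q * r) = rootProd p q * rootProd p r := by
  simp [rootProd, Multiset.prod_map_mul]

lemma rootProd_pow (p q : K[X]) (n : ℕ) : rootProd p (q ^ n) = rootProd p q ^ n := by
  simp [rootProd, Multiset.prod_map_pow]

lemma rootProd_C (p : K[X]) (c : K) : rootProd p (C c) = c ^ p.roots.card := by
  simp [rootProd]

lemma rootProd_pow_left (p q : K[X]) (n : ℕ) : rootProd (p ^ n) q = rootProd p q ^ n := by
  simp [rootProd, roots_pow, Multiset.map_nsmul, Multiset.prod_nsmul]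

lemma rootProd_C_mul_left (p q : K[X]) {c : K} (hc : c ≠ 0) :
    rootProd (C c * p) q = rootProd p q := by
  rw [rootProd, roots_C_mul _ hc, rootProd]

lemma rootProd_congr_right {p q r : K[X]} (h : ∀ α, p.IsRoot α → q.eval α = r.eval α) :
    rootProd p q = rootProd p r :=
  congrArg Multiset.prod (Multiset.map_congr rfl fun α hα => h α (isRoot_of_mem_roots hα))

lemma rootProd_comm [IsAlgClosed K] (p q : K[X]) :
    p.leadingCoeff ^ q.natDegree * rootProd p q =
      (-1) ^ (p.natDegree * q.natDegree) * q.leadingCoeff ^ p.natDegree * rootProd q p := by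
  rw [rootProd, rootProd, ← resultant_eq_prod_eval _ _ _ le_rfl (IsAlgClosed.splits p), mul_assoc,
    ← resultant_eq_prod_eval _ _ _ le_rfl (IsAlgClosed.splits q), resultant_comm]

end RootProd

section SignedTwoPowers

variable {R : Type*} [CommRing R]

variable (R) in
def signedTwoPowers : Submonoid R := Submonoid.closure {-1, 2}

lemma neg_one_mem_signedTwoPowers : (-1 : R) ∈ signedTwoPowers R :=
  Submonoid.subset_closure (by simp)

lemma two_mem_signedTwoPowers : (2 : R) ∈ signedTwoPowers R :=
  Submonoid.subset_closure (by simp)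

lemma mem_signedTwoPowers_iff {z : R} :
    z ∈ signedTwoPowers R ↔ ∃ m : ℕ, z = 2 ^ m ∨ z = -2 ^ m := by
  rw [signedTwoPowers, Submonoid.mem_closure_pair]
  constructor
  · rintro ⟨s, m, rfl⟩
    refine ⟨m, ?_⟩
    rcases neg_one_pow_eq_or R s with h | h <;> simp [h]
  · rintro ⟨m, rfl | rfl⟩
    exacts [⟨0, m, by simp⟩, ⟨1, m, by simp⟩]

lemma mem_signedTwoPowers_of_sq_eq_one [IsDomain R] {u : R} (hu : u ^ 2 = 1) :
    u ∈ signedTwoPowers R := by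
  rcases sq_eq_one_iff.mp hu with rfl | rfl
  exacts [one_mem _, neg_one_mem_signedTwoPowers]

lemma rootProd_mem_signedTwoPowers_of_swap {K : Type*} [Field K] [IsAlgClosed K] {p q : K[X]}
    (hp : p.leadingCoeff ^ 2 = 1) (hq : q.leadingCoeff ^ 2 = 1)
    (h : rootProd q p ∈ signedTwoPowers K) : rootProd p q ∈ signedTwoPowers K := by
  have hp' : p.leadingCoeff ^ q.natDegree * p.leadingCoeff ^ q.natDegree = 1 := by
    rw [← mul_pow, ← sq, hp, one_pow]
  have key : rootProd p q = p.leadingCoeff ^ q.natDegree *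
      ((-1) ^ (p.natDegree * q.natDegree) * q.leadingCoeff ^ p.natDegree * rootProd q p) := by
    rw [← rootProd_comm, ← mul_assoc, hp', one_mul]
  rw [key]
  exact mul_mem (pow_mem (mem_signedTwoPowers_of_sq_eq_one hp) _) <| mul_mem
    (mul_mem (pow_mem neg_one_mem_signedTwoPowers _)
      (pow_mem (mem_signedTwoPowers_of_sq_eq_one hq) _)) h

end SignedTwoPowers

section GhStep

variable {R S : Type*} [CommRing R] [CommRing S]

def ghStep (p : R × R) : R × R := (2 * p.2 ^ 2, (p.1 - p.2) ^ 2)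

lemma map_ghStep (f : R →+* S) (p : R × R) :
    Prod.map f f (ghStep p) = ghStep (Prod.map f f p) := by
  simp [ghStep, map_ofNat f 2]

lemma ghStep_iterate_two_mul_self (y : R) (m : ℕ) :
    ghStep^[m] (2 * y, y) = (2 * y ^ 2 ^ m, y ^ 2 ^ m) := by
  induction m with
  | zero => simp
  | succ m ih =>
    rw [Function.iterate_succ_apply', ih, ghStep]
    congr 1 <;> ring

lemma snd_ghStep_iterate_zero (x : R) (m : ℕ) :
    (ghStep^[m + 1] (x, 0)).2 = x ^ 2 ^ (m + 1) := by
  rcases m with _ | m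
  · simp [ghStep]
  · have h : ghStep (ghStep (x, 0)) = (2 * x ^ 4, x ^ 4) := by
      simp only [ghStep, Prod.mk.injEq]; constructor <;> ring
    rw [Function.iterate_succ_apply, Function.iterate_succ_apply, h,
      ghStep_iterate_two_mul_self]
    ring

end GhStep

section GhPair

variable {K L : Type*} [Field K] [Field L]

lemma ghPair_succ (n : ℕ) : ghPair K (n + 1) = ghStep (ghPair K n) := rfl

lemma ghPair_add (n m : ℕ) : ghPair K (n + m) = ghStep^[m] (ghPair K n) := by
  induction m with
  | zero => rfl
  | succ m ih => rw [← add_assoc, ghPair_succ, ih, Function.iterate_succ_apply']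

lemma map_ghPair (f : K →+* L) (n : ℕ) :
    Prod.map (map f) (map f) (ghPair K n) = ghPair L n := by
  induction n with
  | zero => simp [ghPair, map_ofNat f 2]
  | succ n ih => rw [ghPair_succ, ← coe_mapRingHom, map_ghStep, coe_mapRingHom, ih, ghPair_succ]

lemma eval_ghPair_add (α : K) (n m : ℕ) :
    Prod.map (eval α) (eval α) (ghPair K (n + m)) =
      ghStep^[m] (Prod.map (eval α) (eval α) (ghPair K n)) := by
  rw [ghPair_add, ← coe_evalRingHom]
  exact Function.Semiconj.iterate_right (fun p => map_ghStep (evalRingHom α) p) m _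

end GhPair

section Resultants

variable {K : Type*} [Field K]

local notation "g[" j "]" => Prod.fst (ghPair K j)
local notation "h[" j "]" => Prod.snd (ghPair K j)
local notation "d[" j "]" => Prod.fst (ghPair K j) - Prod.snd (ghPair K j)

lemma natDegree_le_and_coeff_ghPair (j : ℕ) :
    h[j].natDegree ≤ 2 ^ (j + 1) ∧ h[j].coeff (2 ^ (j + 1)) = 1 ∧
      d[j].natDegree ≤ 2 ^ (j + 1) ∧ d[j].coeff (2 ^ (j + 1)) ^ 2 = 1 := by
  induction j with
  | zero =>
    simp only [ghPair, zero_add, pow_one]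
    refine ⟨?_, ?_, ?_, ?_⟩
    · compute_degree!
    · simp [sub_sq, coeff_X, coeff_one]
    · compute_degree!
    · simp [sub_sq, coeff_X, coeff_one]
  | succ j ih =>
    obtain ⟨h_deg, h_coeff, d_deg, d_coeff⟩ := ih
    have h_deg_sq : (h[j] ^ 2).natDegree ≤ 2 * 2 ^ (j + 1) := natDegree_pow_le_of_le 2 h_deg
    have d_deg_sq : (d[j] ^ 2).natDegree ≤ 2 * 2 ^ (j + 1) := natDegree_pow_le_of_le 2 d_deg
    have h_coeff_sq : (h[j] ^ 2).coeff (2 * 2 ^ (j + 1)) = 1 := by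
      rw [coeff_pow_of_natDegree_le h_deg, h_coeff, one_pow]
    have d_coeff_sq : (d[j] ^ 2).coeff (2 * 2 ^ (j + 1)) = 1 := by
      rw [coeff_pow_of_natDegree_le d_deg, d_coeff]
    rw [ghPair_succ, pow_succ 2 (j + 1), mul_comm _ 2]
    dsimp only [ghStep]
    refine ⟨d_deg_sq, d_coeff_sq, (natDegree_sub_le_of_le ?_ d_deg_sq).trans_eq (max_self _), ?_⟩
    · exact (natDegree_mul_le_of_le (natDegree_ofNat 2).le h_deg_sq).trans_eq (zero_add _)
    · rw [coeff_sub, coeff_ofNat_mul, h_coeff_sq, d_coeff_sq]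
      norm_num

lemma monic_snd_ghPair (j : ℕ) : h[j].Monic := by
  obtain ⟨h_deg, h_coeff, -, -⟩ := natDegree_le_and_coeff_ghPair (K := K) j
  rw [Monic, leadingCoeff, natDegree_eq_of_le_of_coeff_ne_zero h_deg (by simp [h_coeff]), h_coeff]

lemma leadingCoeff_fst_sub_snd_ghPair_sq (j : ℕ) : d[j].leadingCoeff ^ 2 = 1 := by
  obtain ⟨-, -, d_deg, d_coeff⟩ := natDegree_le_and_coeff_ghPair (K := K) j
  rwa [leadingCoeff, natDegree_eq_of_le_of_coeff_ne_zero d_deg (by rintro h; simp [h] at d_coeff)]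

lemma fst_ghPair_succ (j : ℕ) : g[j + 1] = C 2 * h[j] ^ 2 := by
  rw [ghPair_succ, ghStep, C_ofNat]

lemma eval_snd_ghPair_add_of_isRoot {j : ℕ} {α : K} (hα : h[j].IsRoot α) (m : ℕ) :
    h[j + (m + 1)].eval α = (g[j] ^ 2 ^ (m + 1)).eval α := by
  have hpair : Prod.map (eval α) (eval α) (ghPair K j) = (g[j].eval α, 0) := Prod.ext rfl hα
  rw [eval_pow, ← snd_ghStep_iterate_zero, ← hpair, ← eval_ghPair_add]
  rfl

lemma eval_fst_ghPair_succ_of_isRoot {j : ℕ} {α : K} (hα : d[j + 1].IsRoot α) :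
    g[j + 1].eval α = (d[j] ^ 2).eval α := by
  rw [IsRoot, eval_sub, sub_eq_zero] at hα
  rw [hα]
  rfl

lemma eval_fst_sub_snd_ghPair_succ_of_isRoot {j : ℕ} {α : K} (hα : d[j].IsRoot α) :
    d[j + 1].eval α = (C 2 * g[j] ^ 2).eval α := by
  rw [IsRoot, eval_sub, sub_eq_zero] at hα
  simp [ghPair_succ, ghStep, hα]

lemma rootProd_fst_sub_snd_snd_eq (j : ℕ) : rootProd d[j] h[j] = rootProd d[j] g[j] := by
  refine rootProd_congr_right fun α hα => ?_
  rw [IsRoot, eval_sub, sub_eq_zero] at hα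
  exact hα.symm

variable [IsAlgClosed K]

lemma rootProd_fst_sub_snd_fst_mem (j : ℕ) : rootProd d[j] g[j] ∈ signedTwoPowers K := by
  induction j with
  | zero =>
    simpa [ghPair, rootProd_C] using pow_mem (two_mem_signedTwoPowers (R := K)) _
  | succ j ih =>
    have h_swap : rootProd d[j] d[j + 1] ∈ signedTwoPowers K := by
      rw [rootProd_congr_right fun α => eval_fst_sub_snd_ghPair_succ_of_isRoot, rootProd_mul,
        rootProd_C, rootProd_pow]
      exact mul_mem (pow_mem two_mem_signedTwoPowers _) (pow_mem ih 2)
    rw [rootProd_congr_right fun α => eval_fst_ghPair_succ_of_isRoot, rootProd_pow]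
    exact pow_mem (rootProd_mem_signedTwoPowers_of_swap (leadingCoeff_fst_sub_snd_ghPair_sq _)
      (leadingCoeff_fst_sub_snd_ghPair_sq _) h_swap) 2

lemma rootProd_snd_fst_mem (j : ℕ) : rootProd h[j] g[j] ∈ signedTwoPowers K := by
  cases j with
  | zero =>
    simpa [ghPair, rootProd_C] using pow_mem (two_mem_signedTwoPowers (R := K)) _
  | succ j =>
    rw [fst_ghPair_succ, rootProd_mul, rootProd_C, rootProd_pow, ghPair_succ, ghStep,
      rootProd_pow_left, rootProd_fst_sub_snd_snd_eq]
    exact mul_mem (pow_mem two_mem_signedTwoPowers _)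
      (pow_mem (pow_mem (rootProd_fst_sub_snd_fst_mem j) 2) 2)

lemma rootProd_snd_snd_add_mem (j m : ℕ) :
    rootProd h[j] h[j + (m + 1)] ∈ signedTwoPowers K := by
  rw [rootProd_congr_right fun α hα => eval_snd_ghPair_add_of_isRoot hα m, rootProd_pow]
  exact pow_mem (rootProd_snd_fst_mem j) _

lemma leadingCoeff_pow_mul_rootProd_fst_succ_snd_mem [NeZero (2 : K)] (j m N : ℕ) :
    g[j + 1].leadingCoeff ^ N * rootProd g[j + 1] h[j + (m + 1)] ∈ signedTwoPowers K := by
  rw [fst_ghPair_succ, leadingCoeff_mul, leadingCoeff_C, (monic_snd_ghPair j).pow 2 |>.leadingCoeff,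
    mul_one, rootProd_C_mul_left _ _ two_ne_zero, rootProd_pow_left]
  exact mul_mem (pow_mem two_mem_signedTwoPowers _) (pow_mem (rootProd_snd_snd_add_mem j m) 2)

end Resultants

lemma resQ_eq_leadingCoeff_pow_mul_rootProd (p q : ℚ[X]) :
    resQ p q = (p.map (algebraMap ℚ ℂ)).leadingCoeff ^ q.natDegree *
      rootProd (p.map (algebraMap ℚ ℂ)) (q.map (algebraMap ℚ ℂ)) :=
  rfl

/-- For `n ≥ 3` and `2 ≤ k ≤ n`, the resultant `Res(g_k, h_n)` is,
up to sign, a power of `2`. -/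
theorem stmt18 : ∀ n k : ℕ, 3 ≤ n → 2 ≤ k → k ≤ n →
    ∃ m : ℕ, resQ (gPol ℚ k) (hPol ℚ n) = 2 ^ m ∨ resQ (gPol ℚ k) (hPol ℚ n) = -(2 ^ m) := by
  intro n k _ hk hkn
  obtain ⟨j, rfl⟩ := Nat.exists_eq_add_of_le' hk
  obtain ⟨m, rfl⟩ := Nat.exists_eq_add_of_le hkn
  have hg : (gPol ℚ (j + 2)).map (algebraMap ℚ ℂ) = (ghPair ℂ (j + 1)).1 :=
    congrArg Prod.fst (map_ghPair _ (j + 1))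
  have hh : (hPol ℚ (j + 2 + m)).map (algebraMap ℚ ℂ) = (ghPair ℂ (j + (m + 1))).2 := by
    rw [hPol, show j + 2 + m - 1 = j + (m + 1) by omega]
    exact congrArg Prod.snd (map_ghPair _ _)
  rw [← mem_signedTwoPowers_iff, resQ_eq_leadingCoeff_pow_mul_rootProd, hg, hh]
  exact leadingCoeff_pow_mul_rootProd_fst_succ_snd_mem j m _
end

section
/- Let α ≠ 0 and define α₁ = 1 + √(2/α), α₂ = 1 − √(2/α), and recursively α_{ℓ1} = 1 + √(2/α_ℓ), α_{ℓ2} = 1 − √(2/α_ℓ) (all in a field containing the relevant square roots). Then: (i) α_{ℓ1}α_{ℓ2} = (α_ℓ − 2)/α_ℓ; (ii) ((α_{ℓ1} − 1)(α_{ℓ'1} − 1))² = 4/(α_ℓ α_{ℓ'}); (iii) ( (α₁₁₁−1)(α₁₂₁−1)/2 · (α₁₁−1)/(α₂₁−1) )² = −1, i.e., i lies in the field generated by the third-level preimages; (iv) 2(α − 2) = ( (α₁−1)⁻¹ · 2(α₁₁−1)⁻¹ · 2(α₂₁−1)⁻¹ )². -/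
/-!
Write `t` for the chosen root with `t² = 2/β`, so the two preimages of `β` are `1 ± t`.
Then `(1 + t)(1 - t) = 1 - 2/β`, and `(t⁻¹)² = β/2`; every identity is a product of such
squares. For (iii) the decisive relation is `α₁ α₁₁ α₁₂ = α₁ - 2 = -α₂`, since `α₁ + α₂ = 2`;
for (iv) it is `α α₁ α₂ = α - 2`.
-/

section Preimage

variable {K : Type*} [Field K] {β β' t t' : K}

theorem one_add_mul_one_sub_of_sq_eq_two_div (hβ : β ≠ 0) (ht : t ^ 2 = 2 / β) :
    (1 + t) * (1 - t) = (β - 2) / β := by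
  rw [sub_div, div_self hβ, ← ht]
  ring

theorem mul_one_add_mul_one_sub_of_sq_eq_two_div (hβ : β ≠ 0) (ht : t ^ 2 = 2 / β) :
    β * ((1 + t) * (1 - t)) = β - 2 := by
  rw [one_add_mul_one_sub_of_sq_eq_two_div hβ ht, mul_div_cancel₀ _ hβ]

theorem mul_sq_of_sq_eq_two_div (ht : t ^ 2 = 2 / β) (ht' : t' ^ 2 = 2 / β') :
    (t * t') ^ 2 = 4 / (β * β') := by
  rw [mul_pow, ht, ht', div_mul_div_comm]
  norm_num

theorem inv_sq_of_sq_eq_two_div (ht : t ^ 2 = 2 / β) : t⁻¹ ^ 2 = β / 2 := by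
  rw [inv_pow, ht, inv_div]

end Preimage

theorem stmt19_general {K : Type*} [Field K] [CharZero K]
    (α α₁ α₂ α₁₁ α₁₂ α₂₁ α₁₁₁ α₁₂₁ : K) (s s₁ s₂ s₁₁ s₁₂ : K)
    (hα : α ≠ 0) (hα₁ : α₁ ≠ 0) (hα₂ : α₂ ≠ 0)
    (hs : s ^ 2 = 2 / α) (h1 : α₁ = 1 + s) (h2 : α₂ = 1 - s)
    (hs₁ : s₁ ^ 2 = 2 / α₁) (h11 : α₁₁ = 1 + s₁) (h12 : α₁₂ = 1 - s₁)
    (hs₂ : s₂ ^ 2 = 2 / α₂) (h21 : α₂₁ = 1 + s₂)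
    (hs₁₁ : s₁₁ ^ 2 = 2 / α₁₁) (h111 : α₁₁₁ = 1 + s₁₁)
    (hs₁₂ : s₁₂ ^ 2 = 2 / α₁₂) (h121 : α₁₂₁ = 1 + s₁₂) :
    (∀ β β₁ β₂ t : K, β ≠ 0 → t ^ 2 = 2 / β → β₁ = 1 + t → β₂ = 1 - t →
        β₁ * β₂ = (β - 2) / β) ∧
    (∀ β β' β₁ β'₁ t t' : K, β ≠ 0 → β' ≠ 0 → t ^ 2 = 2 / β → t' ^ 2 = 2 / β' →
        β₁ = 1 + t → β'₁ = 1 + t' →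
        ((β₁ - 1) * (β'₁ - 1)) ^ 2 = 4 / (β * β')) ∧
    ((α₁₁₁ - 1) * (α₁₂₁ - 1) / 2 * ((α₁₁ - 1) / (α₂₁ - 1))) ^ 2 = -1 ∧
    2 * (α - 2) = ((α₁ - 1)⁻¹ * (2 * (α₁₁ - 1)⁻¹) * (2 * (α₂₁ - 1)⁻¹)) ^ 2 := by
  subst h1 h2 h11 h12 h21 h111 h121
  simp only [add_sub_cancel_left]
  refine ⟨fun β β₁ β₂ t hβ ht h1 h2 => h1 ▸ h2 ▸ one_add_mul_one_sub_of_sq_eq_two_div hβ ht,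
    fun β β' β₁ β'₁ t t' _ _ ht ht' h1 h1' => ?_, ?_, ?_⟩
  · subst h1 h1'
    simpa only [add_sub_cancel_left] using mul_sq_of_sq_eq_two_div ht ht'
  · have hprod : (1 + s) * ((1 + s₁) * (1 - s₁)) = -(1 - s) := by
      rw [mul_one_add_mul_one_sub_of_sq_eq_two_div hα₁ hs₁]
      ring
    obtain ⟨hα₁₁, hα₁₂⟩ : 1 + s₁ ≠ 0 ∧ 1 - s₁ ≠ 0 :=
      mul_ne_zero_iff.mp (right_ne_zero_of_mul (hprod ▸ neg_ne_zero.mpr hα₂))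
    calc (s₁₁ * s₁₂ / 2 * (s₁ / s₂)) ^ 2 = s₁₁ ^ 2 * s₁₂ ^ 2 * s₁ ^ 2 * s₂⁻¹ ^ 2 / 4 := by ring
      _ = 2 / (1 + s₁) * (2 / (1 - s₁)) * (2 / (1 + s)) * ((1 - s) / 2) / 4 := by
        rw [hs₁₁, hs₁₂, hs₁, inv_sq_of_sq_eq_two_div hs₂]
      _ = -1 := by
        field_simp
        linear_combination 4 * hprod
  · calc 2 * (α - 2) = 2 * (α * ((1 + s) * (1 - s))) := by
          rw [mul_one_add_mul_one_sub_of_sq_eq_two_div hα hs]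
      _ = 16 * s⁻¹ ^ 2 * (s₁⁻¹ ^ 2 * s₂⁻¹ ^ 2) := by
          rw [inv_sq_of_sq_eq_two_div hs, inv_sq_of_sq_eq_two_div hs₁,
            inv_sq_of_sq_eq_two_div hs₂]
          ring
      _ = (s⁻¹ * (2 * s₁⁻¹) * (2 * s₂⁻¹)) ^ 2 := by ring

/-- Basic identities among the iterated preimages of `α` under
`f(x) = 2/(x-1)²`:  with `α_{ℓ1} = 1 + √(2/α_ℓ)` and `α_{ℓ2} = 1 − √(2/α_ℓ)`,
(i) `α_{ℓ1} α_{ℓ2} = (α_ℓ − 2)/α_ℓ`;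
(ii) `((α_{ℓ1} − 1)(α_{ℓ'1} − 1))² = 4/(α_ℓ α_{ℓ'})`;
(iii) `((α₁₁₁−1)(α₁₂₁−1)/2 · (α₁₁−1)/(α₂₁−1))² = −1`, so `i` lies in the field
generated by the third-level preimages;
(iv) `2(α − 2) = ((α₁−1)⁻¹ · 2(α₁₁−1)⁻¹ · 2(α₂₁−1)⁻¹)²`. -/
theorem stmt19 {K : Type*} [Field K] [CharZero K]
    (α α₁ α₂ α₁₁ α₁₂ α₂₁ α₁₁₁ α₁₂₁ : K) (s s₁ s₂ s₁₁ s₁₂ : K)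
    (hα : α ≠ 0) (hα₁ : α₁ ≠ 0) (hα₂ : α₂ ≠ 0) (hα₁₁ : α₁₁ ≠ 0) (hα₁₂ : α₁₂ ≠ 0)
    (hs : s ^ 2 = 2 / α) (h1 : α₁ = 1 + s) (h2 : α₂ = 1 - s)
    (hs₁ : s₁ ^ 2 = 2 / α₁) (h11 : α₁₁ = 1 + s₁) (h12 : α₁₂ = 1 - s₁)
    (hs₂ : s₂ ^ 2 = 2 / α₂) (h21 : α₂₁ = 1 + s₂)
    (hs₁₁ : s₁₁ ^ 2 = 2 / α₁₁) (h111 : α₁₁₁ = 1 + s₁₁)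
    (hs₁₂ : s₁₂ ^ 2 = 2 / α₁₂) (h121 : α₁₂₁ = 1 + s₁₂) :
    (∀ β β₁ β₂ t : K, β ≠ 0 → t ^ 2 = 2 / β → β₁ = 1 + t → β₂ = 1 - t →
        β₁ * β₂ = (β - 2) / β) ∧
    (∀ β β' β₁ β'₁ t t' : K, β ≠ 0 → β' ≠ 0 → t ^ 2 = 2 / β → t' ^ 2 = 2 / β' →
        β₁ = 1 + t → β'₁ = 1 + t' →
        ((β₁ - 1) * (β'₁ - 1)) ^ 2 = 4 / (β * β')) ∧
    ((α₁₁₁ - 1) * (α₁₂₁ - 1) / 2 * ((α₁₁ - 1) / (α₂₁ - 1))) ^ 2 = -1 ∧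
    2 * (α - 2) = ((α₁ - 1)⁻¹ * (2 * (α₁₁ - 1)⁻¹) * (2 * (α₂₁ - 1)⁻¹)) ^ 2 :=
  stmt19_general α α₁ α₂ α₁₁ α₁₂ α₂₁ α₁₁₁ α₁₂₁ s s₁ s₂ s₁₁ s₁₂ hα hα₁ hα₂ hs h1 h2 hs₁ h11 h12 hs₂
    h21 hs₁₁ h111 hs₁₂ h121
end
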